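/- arXiv:0902.0232 — 11 statements merged into one kernel-verified Lean document; each statement's English description precedes it below -/
import Mathlib

section
/- Let N be a positive integer, let σ be a uniformly distributed random permutation of {1,…,N}, and let Y_k = #{ i ≤ k : σ(i) ≤ σ(k) } be the relative ranks. Then for every integer i with 2 ≤ i ≤ N, the probability that Y_s > 2 for every s with i < s ≤ N equals i(i−1)/(N(N−1)). -/
open MeasureTheory ProbabilityTheory
open scoped ENNReal

noncomputable section

instance permMeasurableSpace (N : ℕ) : MeasurableSpace (Equiv.Perm (Fin N)) := ⊤

/-- The uniform probability measure on the set of all permutations of `{1,…,N}`. -/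
noncomputable def uniformPerm (N : ℕ) : Measure (Equiv.Perm (Fin N)) :=
  (PMF.uniformOfFintype (Equiv.Perm (Fin N))).toMeasure

/-- The relative rank `Y_k = #{ i : 1 ≤ i ≤ k ∧ σ(i) ≤ σ(k) }` of the `k`-th item
(1-indexed: the paper's item `i ∈ {1,…,N}` is the element `⟨i-1, _⟩ : Fin N`). -/
def relRank (N : ℕ) (σ : Equiv.Perm (Fin N)) (k : ℕ) : ℕ :=
  if h : 1 ≤ k ∧ k ≤ N then
    (Finset.univ.filter fun i : Fin N => (i : ℕ) + 1 ≤ k ∧ σ i ≤ σ ⟨k - 1, by omega⟩).card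
  else 0

/-! The `k`-th item has relative rank at most its value `σ k + 1`, and at least 3 whenever the
two smallest values both occur strictly before it. Hence no candidate appears after time `i`
exactly when the positions of the two smallest values both lie in `{1, …, i}`. Since the
permutation group acts transitively on ordered pairs of distinct positions, the pair of positions
of those two values is uniform over the `N(N-1)` such pairs, and `i(i-1)` of them qualify. -/

open Finset

namespace Equiv.Perm

variable {α : Type*} [DecidableEq α]

theorem exists_apply_eq_and_apply_eq {a b x y : α} (hab : a ≠ b) (hxy : x ≠ y) :
    ∃ π : Perm α, π a = x ∧ π b = y := by
  have hb : swap a x b ≠ x := fun h =>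
    hab ((swap a x).injective (h.trans (swap_apply_left a x).symm)).symm
  exact ⟨swap (swap a x b) y * swap a x, by simpa using swap_apply_of_ne_of_ne hb.symm hxy, by simp⟩

variable [Fintype α]

theorem card_filter_inv_apply_eq_perm_apply (π : Perm α) (a b x y : α) :
    #{σ : Perm α | σ⁻¹ a = π x ∧ σ⁻¹ b = π y} = #{σ : Perm α | σ⁻¹ a = x ∧ σ⁻¹ b = y} :=
  (card_equiv (Equiv.mulRight π⁻¹) fun σ => by
    simp only [mem_filter, mem_univ, true_and, coe_mulRight, mul_inv_rev, inv_inv, mul_apply,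
      π.injective.eq_iff]).symm

theorem card_filter_inv_apply_eq_of_ne {a b x y : α} (hab : a ≠ b) (hxy : x ≠ y) :
    #{σ : Perm α | σ⁻¹ a = x ∧ σ⁻¹ b = y} = #{σ : Perm α | σ⁻¹ a = a ∧ σ⁻¹ b = b} := by
  obtain ⟨π, rfl, rfl⟩ := exists_apply_eq_and_apply_eq hab hxy
  exact card_filter_inv_apply_eq_perm_apply π a b a b

theorem card_filter_inv_apply_mem_and_inv_apply_mem {a b : α} (hab : a ≠ b) (s : Finset α) :
    #{σ : Perm α | σ⁻¹ a ∈ s ∧ σ⁻¹ b ∈ s}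
      = #s.offDiag * #{σ : Perm α | σ⁻¹ a = a ∧ σ⁻¹ b = b} := by
  have hmaps : ∀ σ ∈ ({σ : Perm α | σ⁻¹ a ∈ s ∧ σ⁻¹ b ∈ s} : Finset _),
      (σ⁻¹ a, σ⁻¹ b) ∈ s.offDiag := by
    intro σ hσ
    simp only [mem_filter, mem_univ, true_and] at hσ
    exact mem_offDiag.2 ⟨hσ.1, hσ.2, (σ⁻¹).injective.ne hab⟩
  rw [card_eq_sum_card_fiberwise hmaps, ← smul_eq_mul, ← sum_const]
  refine sum_congr rfl fun p hp => ?_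
  obtain ⟨hx, hy, hxy⟩ := mem_offDiag.1 hp
  rw [← card_filter_inv_apply_eq_of_ne hab hxy, filter_filter]
  congr 1
  ext σ
  simp only [mem_filter, mem_univ, true_and, Prod.ext_iff]
  constructor
  · exact fun h => h.2
  · rintro ⟨ha, hb⟩
    exact ⟨⟨ha ▸ hx, hb ▸ hy⟩, ha, hb⟩

theorem card_filter_inv_apply_mem_and_inv_apply_mem_div_card {a b : α} (hab : a ≠ b)
    (s : Finset α) :
    (#{σ : Perm α | σ⁻¹ a ∈ s ∧ σ⁻¹ b ∈ s} : ℝ≥0∞) / Fintype.card (Perm α)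
      = ((#s * (#s - 1) : ℕ) : ℝ≥0∞) / ((Fintype.card α * (Fintype.card α - 1) : ℕ) : ℝ≥0∞) := by
  have hc : #{σ : Perm α | σ⁻¹ a = a ∧ σ⁻¹ b = b} ≠ 0 :=
    (card_pos.2 ⟨1, by simp [one_def]⟩).ne'
  have huniv := card_filter_inv_apply_mem_and_inv_apply_mem hab univ
  simp only [mem_univ, and_self, filter_true, card_univ] at huniv
  rw [huniv, card_filter_inv_apply_mem_and_inv_apply_mem hab, offDiag_card, offDiag_card,
    card_univ, ← Nat.mul_sub_one, ← Nat.mul_sub_one, Nat.cast_mul, Nat.cast_mul (_ * _)]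
  exact ENNReal.mul_div_mul_right _ _ (by exact_mod_cast hc) (ENNReal.natCast_ne_top _)

end Equiv.Perm

section RelativeRank

open Equiv.Perm

variable {N : ℕ} (σ : Equiv.Perm (Fin N))

theorem relRank_val_add_one (k : Fin N) :
    relRank N σ (k + 1) = #{j : Fin N | j ≤ k ∧ σ j ≤ σ k} := by
  rw [relRank, dif_pos ⟨by omega, k.isLt⟩]
  simp only [Nat.add_sub_cancel, Fin.eta, add_le_add_iff_right, Fin.val_fin_le]

theorem relRank_val_add_one_le (k : Fin N) : relRank N σ (k + 1) ≤ σ k + 1 := by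
  rw [relRank_val_add_one]
  calc #{j | j ≤ k ∧ σ j ≤ σ k}
      ≤ #{j | σ j ≤ σ k} := card_le_card (monotone_filter_right _ fun _ _ => And.right)
    _ = #(Iic (σ k)) := card_equiv σ (by simp)
    _ = σ k + 1 := Fin.card_Iic _

variable {n : ℕ} (σ : Equiv.Perm (Fin (n + 2)))

theorem two_lt_relRank_val_add_one (k : Fin (n + 2)) (h0 : σ⁻¹ 0 < k) (h1 : σ⁻¹ 1 < k) :
    2 < relRank (n + 2) σ (k + 1) := by
  have hk0 : σ k ≠ 0 := fun h => h0.ne (inv_eq_iff_eq.2 h.symm)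
  rw [relRank_val_add_one, two_lt_card]
  refine ⟨σ⁻¹ 0, ?_, σ⁻¹ 1, ?_, k, ?_, ?_, h0.ne, h1.ne⟩
  · simp only [mem_filter, mem_univ, true_and, coe_inv, Equiv.apply_symm_apply]
    exact ⟨h0.le, Fin.zero_le _⟩
  · simp only [mem_filter, mem_univ, true_and, coe_inv, Equiv.apply_symm_apply]
    exact ⟨h1.le, Fin.one_le_of_ne_zero hk0⟩
  · simp
  · exact (σ⁻¹).injective.ne Fin.zero_ne_one

theorem forall_two_lt_relRank_iff (i : ℕ) :
    (∀ s, i < s → s ≤ n + 2 → 2 < relRank (n + 2) σ s) ↔ (σ⁻¹ 0 : ℕ) < i ∧ (σ⁻¹ 1 : ℕ) < i := by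
  constructor
  · intro h
    have hpos : ∀ v : Fin (n + 2), (v : ℕ) ≤ 1 → (σ⁻¹ v : ℕ) < i := by
      intro v hv
      by_contra! hle
      have hlt := h (σ⁻¹ v + 1) (by omega) (σ⁻¹ v).isLt
      have hle := relRank_val_add_one_le σ (σ⁻¹ v)
      rw [show σ (σ⁻¹ v) = v from σ.apply_symm_apply v] at hle
      omega
    exact ⟨hpos 0 (by simp), hpos 1 (by simp)⟩
  · rintro ⟨h0, h1⟩ s hs hsN
    obtain ⟨k, rfl⟩ : ∃ k : Fin (n + 2), s = k + 1 :=
      ⟨⟨s - 1, by omega⟩, (Nat.sub_add_cancel (by omega)).symm⟩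
    exact two_lt_relRank_val_add_one σ k (by rw [Fin.lt_def]; omega) (by rw [Fin.lt_def]; omega)

end RelativeRank

theorem uniformPerm_apply_finset (N : ℕ) (T : Finset (Equiv.Perm (Fin N))) :
    uniformPerm N T = #T / Fintype.card (Equiv.Perm (Fin N)) := by
  rw [uniformPerm, PMF.toMeasure_apply_finset]
  simp only [PMF.uniformOfFintype_apply, sum_const, nsmul_eq_mul, div_eq_mul_inv]

/-- The probability that no candidate (relative rank ≤ 2) appears at times
`i+1, …, N` equals `i(i−1)/(N(N−1))`. -/
theorem prob_no_candidate_after (N i : ℕ) (hi : 2 ≤ i) (hiN : i ≤ N) :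
    uniformPerm N {σ : Equiv.Perm (Fin N) | ∀ s : ℕ, i < s → s ≤ N → 2 < relRank N σ s}
      = ((i * (i - 1) : ℕ) : ℝ≥0∞) / ((N * (N - 1) : ℕ) : ℝ≥0∞) := by
  obtain ⟨n, rfl⟩ : ∃ n, N = n + 2 := ⟨N - 2, by omega⟩
  set S : Finset (Fin (n + 2)) := {j | (j : ℕ) < i}
  have hevent : {σ : Equiv.Perm (Fin (n + 2)) | ∀ s, i < s → s ≤ n + 2 → 2 < relRank (n + 2) σ s}
      = ↑({σ | σ⁻¹ 0 ∈ S ∧ σ⁻¹ 1 ∈ S} : Finset (Equiv.Perm (Fin (n + 2)))) := by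
    ext σ
    simp [forall_two_lt_relRank_iff, S]
  rw [hevent, uniformPerm_apply_finset,
    Equiv.Perm.card_filter_inv_apply_mem_and_inv_apply_mem_div_card Fin.zero_ne_one,
    Fin.card_filter_val_lt, min_eq_right hiN, Fintype.card_fin]
end
end

section
/- Let N be a positive integer, let σ be a uniformly distributed random permutation of {1,…,N}, and let Y_k = #{ i ≤ k : σ(i) ≤ σ(k) } be the relative ranks. Then for all integers i, k with 2 ≤ i < k ≤ N, the probability of the event { Y_s > 2 for all s with i < s < k, and Y_k ≤ 2 } equals 2(i−1)i/((k−2)(k−1)k). -/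
open MeasureTheory ProbabilityTheory
open scoped ENNReal

noncomputable section

/-! Sending a permutation to its sequence of relative ranks `(Y_1, …, Y_N)` is a bijection onto
`∏_{s ≤ N} {1, …, s}`: the ranks recover the relative order of every pair of entries (by strong
induction on the later of the two positions), and both sides have `N!` elements. So the relative
ranks are independent and uniform, the event is a box, and its probability
`∏_{i<s<k} (s-2)/s · 2/k` telescopes to `2(i-1)i/((k-2)(k-1)k)`. -/

open Finset Function

section RankCode

variable {α : Type*} [LinearOrder α] {n : ℕ}

def rankCode (f : Fin n → α) (j : Fin n) : Fin (j + 1) :=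
  ⟨#{i | i < j ∧ f i < f j}, Nat.lt_succ_of_le <| by
    simpa using card_le_card (s := {i | i < j ∧ f i < f j}) (t := Iio j) fun i hi => by
      simp_all⟩

lemma lt_iff_card_le_rankCode {f : Fin n → α} (hf : Injective f) {a b : Fin n} (hab : a < b) :
    f a < f b ↔ #{i | i < b ∧ f i ≤ f a} ≤ rankCode f b := by
  change _ ↔ _ ≤ #{i | i < b ∧ f i < f b}
  refine ⟨fun h => card_le_card fun i hi => ?_, fun h => ?_⟩
  · simp only [mem_filter, mem_univ, true_and] at hi ⊢
    exact ⟨hi.1, hi.2.trans_lt h⟩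
  · by_contra hba
    have hba : f b < f a := (not_lt.1 hba).lt_of_ne (hf.ne hab.ne')
    refine h.not_gt (card_lt_card ⟨fun i hi => ?_, fun hsub => ?_⟩)
    · simp only [mem_filter, mem_univ, true_and] at hi ⊢
      exact ⟨hi.1, (hi.2.trans hba).le⟩
    · exact hba.asymm (mem_filter.1 (hsub (mem_filter.2 ⟨mem_univ a, hab, le_rfl⟩))).2.2

lemma lt_iff_lt_of_lt_of_gt {ι : Type*} [LinearOrder ι] {f g : ι → α} (hf : Injective f)
    (hg : Injective g) {x y : ι} (hxy : x < y → (f x < f y ↔ g x < g y))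
    (hyx : y < x → (f y < f x ↔ g y < g x)) : f x < f y ↔ g x < g y := by
  rcases lt_trichotomy x y with h | rfl | h
  · exact hxy h
  · simp
  · rw [← not_le (a := f y), (hf.ne h.ne).le_iff_lt, ← not_le (a := g y), (hg.ne h.ne).le_iff_lt,
      hyx h]

lemma lt_iff_lt_of_rankCode_eq {f g : Fin n → α} (hf : Injective f) (hg : Injective g)
    (h : rankCode f = rankCode g) (x y : Fin n) : f x < f y ↔ g x < g y := by
  have key : ∀ b a, a < b → (f a < f b ↔ g a < g b) := by
    intro b
    induction b using WellFoundedLT.induction with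
    | _ b ih =>
      intro a hab
      rw [lt_iff_card_le_rankCode hf hab, lt_iff_card_le_rankCode hg hab, h]
      suffices hfg :
          (univ.filter fun i => i < b ∧ f i ≤ f a) = univ.filter fun i => i < b ∧ g i ≤ g a by
        rw [hfg]
      refine filter_congr fun i _ => and_congr_right fun hib => ?_
      rcases eq_or_ne i a with rfl | hia
      · simp
      rw [(hf.ne hia).le_iff_lt, (hg.ne hia).le_iff_lt]
      exact lt_iff_lt_of_lt_of_gt hf hg (fun hi => ih a hab i hi) (fun hi => ih i hib a hi)
  exact lt_iff_lt_of_lt_of_gt hf hg (key y x) (key x y)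

end RankCode

lemma Equiv.Perm.eq_of_lt_iff_lt {ι : Type*} [LinearOrder ι] [WellFoundedLT ι]
    {σ τ : Equiv.Perm ι} (h : ∀ a b, σ a < σ b ↔ τ a < τ b) : σ = τ := by
  let e : ι ≃o ι := ⟨τ.symm.trans σ, fun {x y} => by
    simp only [Equiv.trans_apply]
    rw [← not_lt, h, not_lt]
    simp⟩
  ext x
  simpa [e] using DFunLike.congr_fun (Subsingleton.elim e (OrderIso.refl ι)) (τ x)

lemma rankCode_injective (n : ℕ) :
    Injective fun σ : Equiv.Perm (Fin n) => rankCode σ := fun _ _ h =>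
  Equiv.Perm.eq_of_lt_iff_lt <| lt_iff_lt_of_rankCode_eq (Equiv.injective _) (Equiv.injective _) h

def rankCodeEquiv (n : ℕ) : Equiv.Perm (Fin n) ≃ ∀ j : Fin n, Fin (j + 1) :=
  Equiv.ofBijective _ <| (Fintype.bijective_iff_injective_and_card _).2 ⟨rankCode_injective n, by
    simp [Fintype.card_perm, Fin.prod_univ_eq_prod_range (· + 1), prod_range_add_one_eq_factorial]⟩

lemma uniformPerm_rankCode_mem_pi (N : ℕ) (T : ∀ j : Fin N, Finset (Fin (j + 1))) :
    uniformPerm N {σ | ∀ j, rankCode σ j ∈ T j}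
      = ((∏ j, #(T j) : ℕ) : ℝ≥0∞) / (N.factorial : ℕ) := by
  rw [uniformPerm, PMF.toMeasure_uniformOfFintype_apply _ MeasurableSpace.measurableSet_top,
    Fintype.card_perm, Fintype.card_fin, ← Fintype.card_piFinset, Fintype.card_subtype,
    card_equiv (rankCodeEquiv N) (t := Fintype.piFinset T) (by simp [rankCodeEquiv])]

lemma relRank_succ {N : ℕ} (σ : Equiv.Perm (Fin N)) (j : Fin N) :
    relRank N σ (j + 1) = rankCode σ j + 1 := by
  change _ = #{i | i < j ∧ σ i < σ j} + 1
  rw [relRank, dif_pos ⟨by omega, j.isLt⟩, ← card_insert_of_notMem (s := {i | i < j ∧ σ i < σ j})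
    (a := j) (by simp)]
  congr 1
  ext i
  simp only [mem_filter, mem_univ, true_and, mem_insert, add_tsub_cancel_right, Fin.eta]
  rw [add_le_add_iff_right, ← Fin.le_def, le_iff_eq_or_lt, le_iff_eq_or_lt, σ.injective.eq_iff]
  rcases eq_or_ne i j with rfl | hij <;> simp [*]

/-- The constraint on `c = Y_s - 1` at time `s` imposed by the event. -/
def FirstCandidateCode (i k s c : ℕ) : Prop :=
  (i < s → s < k → 2 ≤ c) ∧ (s = k → c ≤ 1)

instance (i k s : ℕ) : DecidablePred (FirstCandidateCode i k s) :=
  fun _ => inferInstanceAs (Decidable (_ ∧ _))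

lemma setOf_firstCandidate_eq {N i k : ℕ} (hk : 0 < k) (hkN : k ≤ N) :
    {σ : Equiv.Perm (Fin N) |
        (∀ s : ℕ, i < s → s < k → 2 < relRank N σ s) ∧ relRank N σ k ≤ 2}
      = {σ : Equiv.Perm (Fin N) | ∀ j : Fin N,
          rankCode σ j ∈ univ.filter fun c : Fin (j + 1) => FirstCandidateCode i k (j + 1) c} := by
  have time_eq : ∀ s, 0 < s → s ≤ N → ∃ j : Fin N, s = j + 1 := fun s hs hsN =>
    ⟨⟨s - 1, by omega⟩, (Nat.sub_add_cancel hs).symm⟩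
  ext σ
  simp only [Set.mem_ofPred_eq, Finset.mem_filter, Finset.mem_univ, true_and]
  unfold FirstCandidateCode
  constructor
  · rintro ⟨hmid, hlast⟩ j
    refine ⟨fun his hsk => ?_, fun hsk => ?_⟩
    · have := hmid _ his hsk
      rw [relRank_succ] at this
      omega
    · rw [← hsk, relRank_succ] at hlast
      omega
  · intro h
    refine ⟨fun s his hsk => ?_, ?_⟩
    · obtain ⟨j, rfl⟩ := time_eq s (by omega) (by omega)
      have := (h j).1 his hsk
      rw [relRank_succ]
      omega
    · obtain ⟨j, rfl⟩ := time_eq k hk hkN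
      have := (h j).2 rfl
      rw [relRank_succ]
      omega

lemma Fin.card_filter_val (P : ℕ → Prop) [DecidablePred P] (n : ℕ) :
    #{c : Fin n | P c} = #{c ∈ range n | P c} := by
  rw [← card_map Fin.valEmbedding, map_filter', Fin.map_valEmbedding_univ]
  congr 1
  ext x
  simp +contextual [Fin.exists_iff]

lemma card_firstCandidateCode {i k : ℕ} (hk : 2 ≤ k) (s : ℕ) :
    #{c ∈ range s | FirstCandidateCode i k s c}
      = if i < s ∧ s < k then s - 2 else if s = k then 2 else s := by
  split_ifs <;>
    [convert Nat.card_Ico 2 s using 2; convert card_range 2 using 2;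
      convert card_range s using 2] <;>
    · ext c
      rw [mem_filter, FirstCandidateCode]
      simp only [mem_range, mem_Ico]
      omega

lemma prod_Ico_sub_two_mul {i m : ℕ} (h : i < m) :
    (∏ s ∈ Ico (i + 1) m, (s - 2)) * ((m - 2) * (m - 1))
      = (i - 1) * i * ∏ s ∈ Ico (i + 1) m, s := by
  induction m, h using Nat.le_induction with
  | base => simp
  | succ m hm ih =>
    rw [prod_Ico_succ_top hm, prod_Ico_succ_top hm, show m + 1 - 2 = m - 1 by omega,
      Nat.add_sub_cancel]
    linear_combination m * ih

lemma prod_card_firstCandidateCode {N i k : ℕ} (hik : i < k) (hk : 2 ≤ k) (hkN : k ≤ N) :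
    (∏ j : Fin N, #{c : Fin (j + 1) | FirstCandidateCode i k (j + 1) c}) * ((k - 2) * (k - 1) * k)
      = 2 * (i - 1) * i * N.factorial := by
  set w : ℕ → ℕ := fun s => if i < s ∧ s < k then s - 2 else if s = k then 2 else s
  have hw : ∏ j : Fin N, #{c : Fin (j + 1) | FirstCandidateCode i k (j + 1) c}
      = ∏ s ∈ Ico 1 (N + 1), w s := by
    rw [prod_Ico_eq_prod_range, Nat.add_sub_cancel, ← Fin.prod_univ_eq_prod_range]
    refine prod_congr rfl fun j _ => ?_
    rw [Fin.card_filter_val (FirstCandidateCode i k (j + 1)), card_firstCandidateCode hk, add_comm]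
  have split (f : ℕ → ℕ) : ∏ s ∈ Ico 1 (N + 1), f s
      = (∏ s ∈ Ico 1 (i + 1), f s) * (∏ s ∈ Ico (i + 1) k, f s) * f k
        * ∏ s ∈ Ico (k + 1) (N + 1), f s := by
    rw [← prod_Ico_consecutive f (n := k + 1) (by omega) (by omega), prod_Ico_succ_top (by omega),
      ← prod_Ico_consecutive f (n := i + 1) (by omega) (by omega)]
  have before : ∏ s ∈ Ico 1 (i + 1), w s = ∏ s ∈ Ico 1 (i + 1), s :=
    prod_congr rfl fun s hs => by simp only [w, mem_Ico] at hs ⊢; rw [if_neg, if_neg] <;> omega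
  have between : ∏ s ∈ Ico (i + 1) k, w s = ∏ s ∈ Ico (i + 1) k, (s - 2) :=
    prod_congr rfl fun s hs => by simp only [w, mem_Ico] at hs ⊢; rw [if_pos (by omega)]
  have at_k : w k = 2 := by simp [w]
  have after : ∏ s ∈ Ico (k + 1) (N + 1), w s = ∏ s ∈ Ico (k + 1) (N + 1), s :=
    prod_congr rfl fun s hs => by simp only [w, mem_Ico] at hs ⊢; rw [if_neg, if_neg] <;> omega
  rw [hw, split w, before, between, at_k, after, ← prod_Ico_id_eq_factorial, split fun s => s]
  linear_combination (2 * (∏ s ∈ Ico 1 (i + 1), s) * (∏ s ∈ Ico (k + 1) (N + 1), s) * k)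
    * prod_Ico_sub_two_mul hik

/-- The probability that no candidate (relative rank ≤ 2) appears at times strictly
between `i` and `k` and a candidate appears at time `k` equals
`2(i−1)i/((k−2)(k−1)k)`. -/
theorem prob_first_candidate_at (N i k : ℕ) (hi : 2 ≤ i) (hik : i < k) (hkN : k ≤ N) :
    uniformPerm N {σ : Equiv.Perm (Fin N) |
        (∀ s : ℕ, i < s → s < k → 2 < relRank N σ s) ∧ relRank N σ k ≤ 2}
      = ((2 * (i - 1) * i : ℕ) : ℝ≥0∞) / (((k - 2) * (k - 1) * k : ℕ) : ℝ≥0∞) := by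
  rw [setOf_firstCandidate_eq (by omega) hkN, uniformPerm_rankCode_mem_pi,
    ENNReal.div_eq_div_iff (Nat.cast_ne_zero.2 (by simp only [ne_eq, mul_eq_zero]; omega))
      (ENNReal.natCast_ne_top _) (Nat.cast_ne_zero.2 N.factorial_ne_zero)
      (ENNReal.natCast_ne_top _),
    ← Nat.cast_mul, ← Nat.cast_mul, mul_comm, prod_card_firstCandidateCode hik (by omega) hkN,
    mul_comm]

end
end

section
/- Let N be a positive integer, let σ be a uniformly distributed random permutation of {1,…,N}, and let Y_k = #{ i ≤ k : σ(i) ≤ σ(k) } be the relative ranks. Then for all integers i, k with 2 ≤ i and i + 1 < k ≤ N, the probability of the event { there exists s with i < s < k such that Y_j > 1 for all i < j < s, Y_s = 1, Y_j > 2 for all s < j < k, and Y_k ≤ 2 } equals 2i(k−i−1)/((k−2)(k−1)k). -/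
open MeasureTheory ProbabilityTheory
open scoped ENNReal

noncomputable section

/-!
The relative ranks of a uniform permutation are independent, `Y_p` being uniform on `{1, …, p}`:
`σ ↦ (Y_p - 1)_p` is a bijection onto `∏_p Fin p` (a Lehmer code). The event splits disjointly
according to the time `s ∈ (i, k)` of the last relatively best item, and for fixed `s` it
constrains each `Y_p` separately, so its probability is
`(i / (s - 1)) · (1 / s) · ((s - 1) s / ((k - 2) (k - 1))) · (2 / k) = 2i / ((k - 2) (k - 1) k)`,
independently of `s`. Summing over the `k - i - 1` values of `s` gives the result.
-/

open Finset Equiv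
open scoped Nat

namespace RelativeRank

theorem eq_of_card_Iio_sdiff_eq {α : Type*} [LinearOrder α] [LocallyFiniteOrderBot α]
    (U : Finset α) {v w : α} (hv : v ∉ U) (hw : w ∉ U)
    (h : #(Iio v \ U) = #(Iio w \ U)) : v = w := by
  by_contra hne
  wlog hlt : v < w generalizing v w
  · exact this hw hv h.symm (Ne.symm hne) (lt_of_le_of_ne (not_lt.mp hlt) (Ne.symm hne))
  have hssub : Iio v \ U ⊂ Iio w \ U :=
    Finset.ssubset_iff_subset_ne.2 ⟨sdiff_subset_sdiff (Iio_subset_Iio hlt.le) le_rfl,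
      fun heq => absurd (heq ▸ (show v ∈ Iio w \ U by simp [hlt, hv])) (by simp)⟩
  exact (card_lt_card hssub).ne h

variable {N : ℕ}

/-- `lehmerCode σ j = #{i < j | σ i < σ j}`, the relative rank of `j` minus one. -/
def lehmerCode (σ : Perm (Fin N)) (j : Fin N) : ℕ := #{i | i < j ∧ σ i < σ j}

theorem lehmerCode_le (σ : Perm (Fin N)) (j : Fin N) : lehmerCode σ j ≤ j :=
  calc lehmerCode σ j ≤ #(Iio j) := card_le_card fun i hi => by simp_all
    _ = j := Fin.card_Iio j

theorem lehmerCode_eq_card_sdiff (σ : Perm (Fin N)) (j : Fin N) :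
    lehmerCode σ j = #(Iio (σ j) \ (Ioi j).image σ) := by
  refine card_nbij' σ σ.symm ?_ ?_ (fun _ _ => by simp) (fun _ _ => by simp)
  · intro i hi
    simp only [coe_filter, mem_univ, true_and, Set.mem_ofPred_eq] at hi
    simp [hi.2, hi.1.le]
  · intro v hv
    simp only [coe_sdiff, coe_Iio, coe_image, coe_Ioi, Set.mem_sdiff, Set.mem_Iio,
      Set.mem_image, Set.mem_Ioi, not_exists, not_and] at hv
    have hne : σ.symm v ≠ j := fun h => by simp [← h] at hv
    have hle : ¬ j < σ.symm v := fun h => hv.2 _ h (by simp)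
    simp only [coe_filter, mem_univ, true_and, Set.mem_ofPred_eq, apply_symm_apply]
    exact ⟨lt_of_le_of_ne (not_lt.1 hle) hne, hv.1⟩

/-- At the largest position `j` where `σ` and `τ` differ, both take values outside the common set
`σ '' (j, N)`, and the code counts the values below `σ j` outside it. -/
theorem lehmerCode_injective : Function.Injective (lehmerCode (N := N)) := by
  intro σ τ h
  by_contra hne
  have hD : ({j | σ j ≠ τ j} : Finset (Fin N)).Nonempty := by
    obtain ⟨j, hj⟩ := not_forall.1 (mt Equiv.ext hne)
    exact ⟨j, by simpa using hj⟩
  set j := ({j | σ j ≠ τ j} : Finset (Fin N)).max' hD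
  have hj : σ j ≠ τ j := by simpa using max'_mem _ hD
  have himage : (Ioi j).image σ = (Ioi j).image τ := image_congr fun x hx => by
    by_contra h
    exact not_le.2 (by simpa using hx) (le_max' _ x (by simpa using h))
  refine hj (eq_of_card_Iio_sdiff_eq ((Ioi j).image σ) (by simp) (by simp [himage]) ?_)
  rw [← lehmerCode_eq_card_sdiff, himage, ← lehmerCode_eq_card_sdiff, h]

def lehmerEquiv (N : ℕ) : Perm (Fin N) ≃ ∀ j : Fin N, Fin (j + 1) :=
  Equiv.ofBijective (fun σ j => ⟨lehmerCode σ j, Nat.lt_succ_of_le (lehmerCode_le σ j)⟩) <| by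
    rw [Fintype.bijective_iff_injective_and_card]
    refine ⟨fun σ τ h => lehmerCode_injective (funext fun j => congrArg Fin.val (congrFun h j)), ?_⟩
    simp [Fintype.card_perm, Fin.prod_univ_eq_prod_range (· + 1), prod_range_add_one_eq_factorial]

theorem card_filter_forall_lehmerCode (P : Fin N → ℕ → Prop) [∀ j, DecidablePred (P j)] :
    #{σ : Perm (Fin N) | ∀ j, P j (lehmerCode σ j)} =
      ∏ j : Fin N, #{r ∈ range (j + 1) | P j r} := by
  rw [card_equiv (lehmerEquiv N) (t := Fintype.piFinset fun j : Fin N => {r : Fin (j + 1) | P j r})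
    (by simp [lehmerEquiv]), Fintype.card_piFinset]
  refine prod_congr rfl fun j _ => ?_
  rw [← card_map Fin.valEmbedding]
  congr 1
  ext r
  simp only [mem_map, mem_filter, mem_univ, true_and, Fin.valEmbedding_apply, mem_range]
  exact ⟨fun ⟨x, hx, hxr⟩ => hxr ▸ ⟨x.isLt, hx⟩, fun ⟨hr, hP⟩ => ⟨⟨r, hr⟩, hP, rfl⟩⟩

theorem relRank_succ (σ : Perm (Fin N)) (j : Fin N) :
    relRank N σ (j + 1) = lehmerCode σ j + 1 := by
  rw [relRank, dif_pos ⟨by omega, j.isLt⟩, lehmerCode, ← card_insert_of_notMem (a := j) (by simp)]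
  simp only [Nat.add_sub_cancel, Fin.eta]
  congr 1
  ext i
  simp only [mem_filter, mem_univ, true_and, mem_insert, add_le_add_iff_right, ← Fin.le_def]
  constructor
  · rintro ⟨hij, hle⟩
    rcases eq_or_ne i j with rfl | hne
    · exact Or.inl rfl
    · exact Or.inr ⟨lt_of_le_of_ne hij hne, lt_of_le_of_ne hle (σ.injective.ne hne)⟩
  · rintro (rfl | ⟨hlt, hlt'⟩)
    · exact ⟨le_rfl, le_rfl⟩
    · exact ⟨hlt.le, hlt'.le⟩

theorem card_filter_forall_relRank (P : ℕ → ℕ → Prop) [∀ p, DecidablePred (P p)] :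
    #{σ : Perm (Fin N) | ∀ j : Fin N, P (j + 1) (relRank N σ (j + 1))} =
      ∏ j ∈ range N, #{r ∈ Icc 1 (j + 1) | P (j + 1) r} := by
  simp only [relRank_succ]
  rw [card_filter_forall_lehmerCode (fun j r => P (j + 1) (r + 1)),
    ← Fin.prod_univ_eq_prod_range (fun j => #{r ∈ Icc 1 (j + 1) | P (j + 1) r})]
  refine prod_congr rfl fun j _ => card_nbij' (· + 1) (· - 1) ?_ ?_ ?_ ?_ <;> intro r <;> simp <;>
    grind

/-- The constraint on the relative rank `r` at time `p` when the last relatively best item in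
`(i, k)` arrives at time `s` and the next candidate after it arrives at time `k`. -/
abbrev StopPattern (i s k p r : ℕ) : Prop :=
  (i < p → p < s → 1 < r) ∧ (p = s → r = 1) ∧ (s < p → p < k → 2 < r) ∧ (p = k → r ≤ 2)

def stopEvent (N i s k : ℕ) : Set (Perm (Fin N)) :=
  {σ | ∀ j : Fin N, StopPattern i s k (j + 1) (relRank N σ (j + 1))}

theorem forall_stopPattern_iff {i s k : ℕ} (his : i < s) (hsk : s < k) (hkN : k ≤ N)
    (Y : ℕ → ℕ) : (∀ j : Fin N, StopPattern i s k (j + 1) (Y (j + 1))) ↔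
      (∀ j, i < j → j < s → 1 < Y j) ∧ Y s = 1 ∧ (∀ j, s < j → j < k → 2 < Y j) ∧ Y k ≤ 2 := by
  constructor
  · intro h
    have h' (p : ℕ) (h1 : 1 ≤ p) (h2 : p ≤ N) : StopPattern i s k p (Y p) := by
      simpa [Nat.sub_add_cancel h1] using h ⟨p - 1, by omega⟩
    exact ⟨fun j h1 h2 => (h' j (by omega) (by omega)).1 h1 h2,
      (h' s (by omega) (by omega)).2.1 rfl,
      fun j h1 h2 => (h' j (by omega) (by omega)).2.2.1 h1 h2,
      (h' k (by omega) hkN).2.2.2 rfl⟩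
  · rintro ⟨h1, h2, h3, h4⟩ j
    exact ⟨h1 _, fun h => h ▸ h2, h3 _, fun h => h ▸ h4⟩

theorem pairwiseDisjoint_stopEvent {i k : ℕ} (hkN : k ≤ N) :
    (Set.Ioo i k).PairwiseDisjoint fun s => stopEvent N i s k := by
  have key {s t : ℕ} (hs : s ∈ Set.Ioo i k) (ht : t ∈ Set.Ioo i k) (hst : s < t) :
      Disjoint (stopEvent N i s k) (stopEvent N i t k) := by
    refine Set.disjoint_left.2 fun σ hσs hσt => ?_
    have h1 := ((forall_stopPattern_iff hs.1 hs.2 hkN _).1 hσs).2.1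
    have h2 := ((forall_stopPattern_iff ht.1 ht.2 hkN _).1 hσt).1 s hs.1 hst
    omega
  intro s hs t ht hst
  rcases hst.lt_or_gt with h | h
  · exact key hs ht h
  · exact (key ht hs h).symm

section PatternCount

variable {i s k p : ℕ}

theorem card_stopPattern_of_le_left (hp : p ≤ i) (his : i < s) (hsk : s < k) :
    #{r ∈ Icc 1 p | StopPattern i s k p r} = p := by
  rw [filter_true_of_mem fun r _ => by omega, Nat.card_Icc, Nat.add_sub_cancel]

theorem card_stopPattern_of_right_lt (hp : k < p) (hsk : s < k) :
    #{r ∈ Icc 1 p | StopPattern i s k p r} = p := by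
  rw [filter_true_of_mem fun r _ => by omega, Nat.card_Icc, Nat.add_sub_cancel]

theorem card_stopPattern_not_best (hip : i < p) (hps : p < s) (hsk : s < k) :
    #{r ∈ Icc 1 p | StopPattern i s k p r} = p - 1 := by
  rw [show {r ∈ Icc 1 p | StopPattern i s k p r} = Icc 2 p by ext r; simp; omega, Nat.card_Icc]
  omega

theorem card_stopPattern_best (his : i < s) (hsk : s < k) :
    #{r ∈ Icc 1 s | StopPattern i s k s r} = 1 := by
  rw [show {r ∈ Icc 1 s | StopPattern i s k s r} = {1} by ext r; simp; omega, card_singleton]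

theorem card_stopPattern_not_candidate (hsp : s < p) (hpk : p < k) :
    #{r ∈ Icc 1 p | StopPattern i s k p r} = p - 2 := by
  rw [show {r ∈ Icc 1 p | StopPattern i s k p r} = Icc 3 p by ext r; simp; omega, Nat.card_Icc]
  omega

theorem card_stopPattern_candidate (his : i < s) (hsk : s < k) :
    #{r ∈ Icc 1 k | StopPattern i s k k r} = 2 := by
  rw [show {r ∈ Icc 1 k | StopPattern i s k k r} = Icc 1 2 by ext r; simp; omega, Nat.card_Icc]

/-- The number of sequences of relative ranks `(Y_1, …, Y_n)` that match `StopPattern i s k`. -/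
def patternCount (i s k n : ℕ) : ℕ :=
  ∏ j ∈ range n, #{r ∈ Icc 1 (j + 1) | StopPattern i s k (j + 1) r}

theorem patternCount_succ (n : ℕ) : patternCount i s k (n + 1) =
    patternCount i s k n * #{r ∈ Icc 1 (n + 1) | StopPattern i s k (n + 1) r} :=
  prod_range_succ _ _

theorem patternCount_eq_factorial {n : ℕ} (hn : n ≤ i) (his : i < s) (hsk : s < k) :
    patternCount i s k n = n ! := by
  induction n with
  | zero => rfl
  | succ n ih =>
    rw [patternCount_succ, ih (by omega), card_stopPattern_of_le_left hn his hsk,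
      Nat.factorial_succ, mul_comm]

theorem patternCount_mul_eq_of_lt_best {n : ℕ} (hin : i ≤ n) (hns : n < s) (hsk : s < k) :
    patternCount i s k n * n = i * n ! := by
  induction n, hin using Nat.le_induction with
  | base => rw [patternCount_eq_factorial le_rfl hns hsk, mul_comm]
  | succ n hin ih =>
    rw [patternCount_succ, card_stopPattern_not_best (by omega) hns hsk, Nat.add_sub_cancel,
      ih (by omega), Nat.factorial_succ]
    ring

theorem patternCount_mul_eq_of_lt_candidate {n : ℕ} (his : i < s) (hsn : s ≤ n) (hnk : n < k) :
    patternCount i s k n * ((n - 1) * n) = i * n ! := by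
  induction n, hsn using Nat.le_induction with
  | base =>
    obtain ⟨m, rfl⟩ : ∃ m, s = m + 1 := ⟨s - 1, by omega⟩
    rw [patternCount_succ, card_stopPattern_best his hnk, Nat.add_sub_cancel, Nat.factorial_succ]
    calc patternCount i (m + 1) k m * 1 * (m * (m + 1))
        = (patternCount i (m + 1) k m * m) * (m + 1) := by ring
      _ = i * ((m + 1) * m !) := by
        rw [patternCount_mul_eq_of_lt_best (by omega) (by omega) hnk]; ring
  | succ n hsn ih =>
    rw [patternCount_succ, card_stopPattern_not_candidate (by omega) hnk, Nat.factorial_succ,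
      show n + 1 - 2 = n - 1 by omega, Nat.add_sub_cancel]
    calc patternCount i s k n * (n - 1) * (n * (n + 1))
        = (patternCount i s k n * ((n - 1) * n)) * (n + 1) := by ring
      _ = i * ((n + 1) * n !) := by rw [ih (by omega)]; ring

theorem patternCount_mul_eq_of_candidate_le {n : ℕ} (his : i < s) (hsk : s < k) (hkn : k ≤ n) :
    patternCount i s k n * ((k - 2) * (k - 1) * k) = 2 * i * n ! := by
  induction n, hkn using Nat.le_induction with
  | base =>
    obtain ⟨m, rfl⟩ : ∃ m, k = m + 1 := ⟨k - 1, by omega⟩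
    rw [patternCount_succ, card_stopPattern_candidate his hsk, Nat.factorial_succ,
      show m + 1 - 2 = m - 1 by omega, Nat.add_sub_cancel]
    calc patternCount i s (m + 1) m * 2 * ((m - 1) * m * (m + 1))
        = 2 * (patternCount i s (m + 1) m * ((m - 1) * m)) * (m + 1) := by ring
      _ = 2 * i * ((m + 1) * m !) := by
        rw [patternCount_mul_eq_of_lt_candidate his (by omega) (by omega)]; ring
  | succ n hkn ih =>
    rw [patternCount_succ, card_stopPattern_of_right_lt (by omega) hsk, Nat.factorial_succ]
    calc patternCount i s k n * (n + 1) * ((k - 2) * (k - 1) * k)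
        = (patternCount i s k n * ((k - 2) * (k - 1) * k)) * (n + 1) := by ring
      _ = 2 * i * ((n + 1) * n !) := by rw [ih]; ring

end PatternCount

theorem uniformPerm_stopEvent {i s k : ℕ} (his : i < s) (hsk : s < k) (hkN : k ≤ N)
    (hk : 3 ≤ k) : uniformPerm N (stopEvent N i s k) =
      ((2 * i : ℕ) : ℝ≥0∞) / (((k - 2) * (k - 1) * k : ℕ) : ℝ≥0∞) := by
  have hF : stopEvent N i s k = ↑({σ | ∀ j : Fin N, StopPattern i s k (j + 1)
      (relRank N σ (j + 1))} : Finset (Perm (Fin N))) := by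
    ext σ
    simp [stopEvent]
  rw [hF, uniformPerm, PMF.toMeasure_apply_finset]
  simp only [PMF.uniformOfFintype_apply]
  rw [sum_const, nsmul_eq_mul, ← div_eq_mul_inv, card_filter_forall_relRank (StopPattern i s k),
    ← patternCount, Fintype.card_perm, Fintype.card_fin, ENNReal.div_eq_div_iff
      (Nat.cast_ne_zero.2 (Nat.mul_ne_zero (Nat.mul_ne_zero (by omega) (by omega)) (by omega)))
      (ENNReal.natCast_ne_top _) (Nat.cast_ne_zero.2 N.factorial_ne_zero)
      (ENNReal.natCast_ne_top _)]
  exact_mod_cast (by rw [mul_comm, patternCount_mul_eq_of_candidate_le his hsk hkN, mul_comm])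

end RelativeRank

open RelativeRank

/-- The probability that a relatively best item appears at some time `s` with
`i < s < k` (no relatively best item in between), no candidate appears at times
strictly between `s` and `k`, and a candidate appears at time `k`, equals
`2i(k−i−1)/((k−2)(k−1)k)`. -/
theorem prob_stops_being_candidate_at (N i k : ℕ) (hi : 2 ≤ i) (hik : i + 1 < k)
    (hkN : k ≤ N) :
    uniformPerm N {σ : Equiv.Perm (Fin N) |
        ∃ s : ℕ, i < s ∧ s < k ∧ (∀ j : ℕ, i < j → j < s → 1 < relRank N σ j) ∧
          relRank N σ s = 1 ∧ (∀ j : ℕ, s < j → j < k → 2 < relRank N σ j) ∧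
          relRank N σ k ≤ 2}
      = ((2 * i * (k - i - 1) : ℕ) : ℝ≥0∞) / (((k - 2) * (k - 1) * k : ℕ) : ℝ≥0∞) := by
  have hevent : {σ : Equiv.Perm (Fin N) |
      ∃ s : ℕ, i < s ∧ s < k ∧ (∀ j : ℕ, i < j → j < s → 1 < relRank N σ j) ∧
        relRank N σ s = 1 ∧ (∀ j : ℕ, s < j → j < k → 2 < relRank N σ j) ∧
        relRank N σ k ≤ 2} = ⋃ s ∈ Ioo i k, stopEvent N i s k := by
    ext σ
    simp only [Set.mem_ofPred_eq, Set.mem_iUnion, mem_Ioo, exists_prop, stopEvent]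
    refine exists_congr fun s => ⟨fun ⟨his, hsk, h⟩ => ⟨⟨his, hsk⟩, ?_⟩,
      fun ⟨⟨his, hsk⟩, h⟩ => ⟨his, hsk, ?_⟩⟩
    · exact (forall_stopPattern_iff his hsk hkN _).2 h
    · exact (forall_stopPattern_iff his hsk hkN _).1 h
  rw [hevent, measure_biUnion_finset (by simpa using pairwiseDisjoint_stopEvent hkN)
      fun _ _ => MeasurableSpace.measurableSet_top,
    sum_congr rfl fun s hs =>
      uniformPerm_stopEvent (mem_Ioo.1 hs).1 (mem_Ioo.1 hs).2 hkN (by omega),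
    sum_const, Nat.card_Ioo, nsmul_eq_mul, ← mul_div_assoc]
  push_cast
  ring_nf

end
end

section
/- For all integers i, N with 2 ≤ i ≤ N, the following summation identity holds (all terms being real numbers): Σ_{k=i+1}^{N} 2i(k−i−1) / ((k−2)(k−1)k) = (N−i)(N−i−1)/(N(N−1)). -/
/-!
The sum telescopes: with `f n = (n - i)(n - i - 1) / (n(n - 1))`, the `k`-th term is
`f k - f (k - 1)`, and `f i = 0`.
-/

/-- `C(x - a, 2) / C(x, 2)`: the chance that the two best of the first `x` items both arrive
after time `a`. -/
noncomputable def pairRatio (a x : ℝ) : ℝ :=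
  (x - a) * (x - a - 1) / (x * (x - 1))

lemma pairRatio_self (a : ℝ) : pairRatio a a = 0 := by
  simp [pairRatio]

lemma pairRatio_sub_one_add {a x : ℝ} (h₀ : x ≠ 0) (h₁ : x - 1 ≠ 0) (h₂ : x - 2 ≠ 0) :
    pairRatio a (x - 1) + 2 * a * (x - a - 1) / ((x - 2) * (x - 1) * x) = pairRatio a x := by
  have h₂' : x - 1 - 1 ≠ 0 := by rwa [sub_sub, one_add_one_eq_two]
  unfold pairRatio
  field_simp
  ring

/-- `Σ_{k=i+1}^{N} 2i(k−i−1) / ((k−2)(k−1)k) = (N−i)(N−i−1)/(N(N−1))` for `2 ≤ i ≤ N`. -/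
theorem sum_duration_best (i N : ℕ) (hi : 2 ≤ i) (hiN : i ≤ N) :
    ∑ k ∈ Finset.Icc (i + 1) N,
        2 * (i : ℝ) * ((k : ℝ) - i - 1) / (((k : ℝ) - 2) * ((k : ℝ) - 1) * k)
      = ((N : ℝ) - i) * ((N : ℝ) - i - 1) / ((N : ℝ) * ((N : ℝ) - 1)) := by
  change _ = pairRatio i N
  induction N, hiN using Nat.le_induction with
  | base => rw [Finset.Icc_eq_empty (by omega), Finset.sum_empty, pairRatio_self]
  | succ N hN ih =>
    have hN₂ : (2 : ℝ) ≤ N := by exact_mod_cast hi.trans hN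
    have step := pairRatio_sub_one_add (a := i) (x := ((N + 1 : ℕ) : ℝ))
      (by push_cast; linarith) (by push_cast; linarith) (by push_cast; linarith)
    rw [Finset.sum_Icc_succ_top (by omega), ih]
    simpa only [Nat.cast_succ, add_sub_cancel_right] using step
end

section
/- For all integers N, k with 2 ≤ k ≤ N, the following identity of real numbers holds: (1/N) [ Σ_{s=k+1}^{N} 2k(s−k−1)(s−k)/(s(s−1)(s−2)) + (N+1−k)(2Nk − k² − k)/(N(N−1)) ] = (k/N²) ( 1 + k − N + 2N(H_{N−1} − H_{k−1}) ), where H_n = Σ_{j=1}^{n} 1/j is the n-th harmonic number (H_0 = 0). -/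
/-- The `n`-th harmonic number `H_n = Σ_{j=1}^{n} 1/j` (with `H_0 = 0`), as a real number. -/
noncomputable def harm (n : ℕ) : ℝ := ∑ j ∈ Finset.Icc 1 n, (1 : ℝ) / j

/-- Closed form of the expected proportional duration `φ(k,1)` of a relatively best
item selected at time `k`, via harmonic numbers. -/
theorem phi_one_closed_form (N k : ℕ) (hk : 2 ≤ k) (hkN : k ≤ N) :
    (1 / (N : ℝ)) *
        ((∑ s ∈ Finset.Icc (k + 1) N,
            2 * (k : ℝ) * ((s : ℝ) - k - 1) * ((s : ℝ) - k) /
              ((s : ℝ) * ((s : ℝ) - 1) * ((s : ℝ) - 2))) +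
          ((N : ℝ) + 1 - k) * (2 * (N : ℝ) * k - (k : ℝ) ^ 2 - k) / ((N : ℝ) * ((N : ℝ) - 1)))
      = ((k : ℝ) / (N : ℝ) ^ 2) *
          (1 + (k : ℝ) - N + 2 * (N : ℝ) * (harm (N - 1) - harm (k - 1))) := by
  induction N, hkN using Nat.le_induction with
  | base =>
    rw [Finset.Icc_eq_empty (by omega), Finset.sum_empty, sub_self]
    have hk0 : (k : ℝ) ≠ 0 := by
      exact Nat.cast_ne_zero.mpr (by omega)
    have hk2 : (2 : ℝ) ≤ (k : ℝ) := by exact_mod_cast hk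
    have hk1 : (k : ℝ) - 1 ≠ 0 := by linarith
    field_simp
    ring
  | succ N hN ih =>
    have h2N : 2 ≤ N := le_trans hk hN
    have hN2 : (2 : ℝ) ≤ (N : ℝ) := by exact_mod_cast h2N
    have hN0 : (N : ℝ) ≠ 0 := by linarith
    have hN1 : (N : ℝ) - 1 ≠ 0 := by linarith
    have hN1' : (N : ℝ) + 1 ≠ 0 := by linarith
    -- split the sum
    rw [Finset.sum_Icc_succ_top (by omega : k + 1 ≤ N + 1)]
    -- harm (N+1-1) = harm (N-1) + 1/N
    have hharm : harm ((N + 1) - 1) = harm (N - 1) + 1 / (N : ℝ) := by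
      have h : N - 1 + 1 = N := by omega
      show harm N = _
      unfold harm
      rw [← h, Finset.sum_Icc_succ_top (by omega), h]
    rw [hharm]
    -- solve for the sum from ih
    set S := ∑ s ∈ Finset.Icc (k + 1) N,
        2 * (k : ℝ) * ((s : ℝ) - k - 1) * ((s : ℝ) - k) /
          ((s : ℝ) * ((s : ℝ) - 1) * ((s : ℝ) - 2)) with hSdef
    set A := ((N : ℝ) + 1 - k) * (2 * (N : ℝ) * k - (k : ℝ) ^ 2 - k) / ((N : ℝ) * ((N : ℝ) - 1)) with hAdef
    set R := ((k : ℝ) / (N : ℝ) ^ 2) *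
        (1 + (k : ℝ) - N + 2 * (N : ℝ) * (harm (N - 1) - harm (k - 1))) with hRdef
    have h2 : S + A = (N : ℝ) * R := by
      rw [← ih]
      field_simp
    have hS : S = (N : ℝ) * R - A := by linarith
    rw [hS, hRdef, hAdef]
    have hNN : (N : ℝ) ^ 3 - (N : ℝ) ≠ 0 := by nlinarith
    have hNN' : -(N : ℝ) + (N : ℝ) ^ 3 ≠ 0 := by nlinarith
    have hNm : (N : ℝ) + 1 - 2 ≠ 0 := by linarith
    push_cast
    field_simp [hN0, hN1, hN1', hNN, hNN', hNm]
    ring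
end

section
/- For all integers N, k with 2 ≤ k ≤ N, the following identity of real numbers holds: (1/N) [ Σ_{s=k+1}^{N} 2k(k−1)(s−k)/(s(s−1)(s−2)) + (N+1−k)·k(k−1)/(N(N−1)) ] = k(N−k+1)/N². -/
lemma phi_two_sum_aux (k : ℕ) (hk : 2 ≤ k) :
    ∀ N : ℕ, k ≤ N →
      (∑ s ∈ Finset.Icc (k + 1) N,
          2 * (k : ℝ) * ((k : ℝ) - 1) * ((s : ℝ) - k) /
            ((s : ℝ) * ((s : ℝ) - 1) * ((s : ℝ) - 2)))
        = (k : ℝ) * ((N : ℝ) + 1 - k) * ((N : ℝ) - k) / ((N : ℝ) * ((N : ℝ) - 1)) := by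
  refine Nat.le_induction ?_ ?_
  · simp
  · intro N hN ih
    have h2N : (2 : ℝ) ≤ (N : ℝ) := by exact_mod_cast le_trans hk hN
    have hN0 : (N : ℝ) ≠ 0 := by linarith
    have hN1 : (N : ℝ) - 1 ≠ 0 := by linarith
    have hN2 : (N : ℝ) + 1 ≠ 0 := by linarith
    rw [Finset.sum_Icc_succ_top (by omega : k + 1 ≤ N + 1), ih]
    push_cast
    rw [show ((N:ℝ)+1-1) = (N:ℝ) by ring, show ((N:ℝ)+1-2) = (N:ℝ)-1 by ring]
    field_simp
    ring

/-- Closed form of the expected proportional duration `φ(k,2)` of a relatively second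
best item selected at time `k`. -/
theorem phi_two_closed_form (N k : ℕ) (hk : 2 ≤ k) (hkN : k ≤ N) :
    (1 / (N : ℝ)) *
        ((∑ s ∈ Finset.Icc (k + 1) N,
            2 * (k : ℝ) * ((k : ℝ) - 1) * ((s : ℝ) - k) /
              ((s : ℝ) * ((s : ℝ) - 1) * ((s : ℝ) - 2))) +
          ((N : ℝ) + 1 - k) * ((k : ℝ) * ((k : ℝ) - 1)) / ((N : ℝ) * ((N : ℝ) - 1)))
      = (k : ℝ) * ((N : ℝ) - k + 1) / (N : ℝ) ^ 2 := by
  rw [phi_two_sum_aux k hk N hkN]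
  have h2N : (2 : ℝ) ≤ (N : ℝ) := by exact_mod_cast le_trans hk hkN
  have hN0 : (N : ℝ) ≠ 0 := by linarith
  have hN1 : (N : ℝ) - 1 ≠ 0 := by linarith
  field_simp
  ring
end

section
/- Let N be a positive integer and define φ(k,1) = (k/N²)(1 + k − N + 2N(H_{N−1} − H_{k−1})) and φ(k,2) = k(N−k+1)/N² for 1 ≤ k ≤ N, where H_n = Σ_{j=1}^{n} 1/j (H_0 = 0). Then φ(k,1) ≥ φ(k,2) for every 1 ≤ k ≤ N, with equality at k = N. -/
lemma harm_diff (m n : ℕ) (h : m ≤ n) :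
    harm n - harm m = ∑ j ∈ Finset.Ioc m n, (1 : ℝ) / j := by
  have h0 : ∀ p : ℕ, harm p = ∑ j ∈ Finset.Ioc 0 p, (1 : ℝ) / j := by
    intro p
    rw [harm]
    congr 1
  have := Finset.sum_Ioc_consecutive (fun j : ℕ => (1 : ℝ) / j) (Nat.zero_le m) h
  rw [h0, h0]
  linarith

lemma key_bound (N k : ℕ) (hN : 1 ≤ N) (hk : 1 ≤ k) (hkN : k ≤ N) :
    (N : ℝ) * (harm (N - 1) - harm (k - 1)) ≥ (N : ℝ) - k := by
  have hmn : k - 1 ≤ N - 1 := Nat.sub_le_sub_right hkN 1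
  rw [harm_diff _ _ hmn]
  have hNpos : (0 : ℝ) < N := by exact_mod_cast hN
  have hsum : ((N - k : ℕ) : ℝ) * (1 / N) ≤ ∑ j ∈ Finset.Ioc (k - 1) (N - 1), (1 : ℝ) / j := by
    have hcard : (Finset.Ioc (k - 1) (N - 1)).card = N - k := by
      rw [Nat.card_Ioc]; omega
    calc ((N - k : ℕ) : ℝ) * (1 / N)
        = (Finset.Ioc (k - 1) (N - 1)).card • (1 / (N : ℝ)) := by
          rw [hcard, nsmul_eq_mul]
      _ ≤ ∑ j ∈ Finset.Ioc (k - 1) (N - 1), (1 : ℝ) / j := by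
          apply Finset.card_nsmul_le_sum
          intro j hj
          rw [Finset.mem_Ioc] at hj
          have hj1 : 1 ≤ j := by omega
          have hjN : j ≤ N := by omega
          have hjpos : (0 : ℝ) < j := by exact_mod_cast hj1
          exact one_div_le_one_div_of_le hjpos (by exact_mod_cast hjN)
  have hcast : ((N - k : ℕ) : ℝ) = (N : ℝ) - k := by
    rw [Nat.cast_sub hkN]
  rw [hcast] at hsum
  have := mul_le_mul_of_nonneg_left hsum (le_of_lt hNpos)
  have heq : (N : ℝ) * (((N : ℝ) - k) * (1 / N)) = (N : ℝ) - k := by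
    field_simp
  linarith

/-- `φ(k,1) ≥ φ(k,2)` for every `1 ≤ k ≤ N`, with equality at `k = N`. -/
theorem phi_one_ge_phi_two (N : ℕ) (hN : 1 ≤ N) :
    (∀ k : ℕ, 1 ≤ k → k ≤ N →
        ((k : ℝ) / (N : ℝ) ^ 2) *
            (1 + (k : ℝ) - N + 2 * (N : ℝ) * (harm (N - 1) - harm (k - 1)))
          ≥ (k : ℝ) * ((N : ℝ) - k + 1) / (N : ℝ) ^ 2) ∧
      ((N : ℝ) / (N : ℝ) ^ 2) *
          (1 + (N : ℝ) - N + 2 * (N : ℝ) * (harm (N - 1) - harm (N - 1)))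
        = (N : ℝ) * ((N : ℝ) - N + 1) / (N : ℝ) ^ 2 := by
  constructor
  · intro k hk hkN
    have key := key_bound N k hN hk hkN
    have hkpos : (0 : ℝ) ≤ k := by positivity
    have hN2 : (0 : ℝ) < (N : ℝ) ^ 2 := by
      have : (0 : ℝ) < N := by exact_mod_cast hN
      positivity
    rw [ge_iff_le]
    have heq : ((k : ℝ) / (N : ℝ) ^ 2) *
        (1 + (k : ℝ) - N + 2 * (N : ℝ) * (harm (N - 1) - harm (k - 1)))
        = (k : ℝ) * (1 + (k : ℝ) - N + 2 * (N : ℝ) * (harm (N - 1) - harm (k - 1))) / (N : ℝ) ^ 2 := by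
      ring
    rw [heq]
    gcongr ?_ / _
    nlinarith [key, hkpos]
  · ring
end

section
/- Let N be a positive integer and define φ(k,1) = (k/N²)(1 + k − N + 2N(H_{N−1} − H_{k−1})) for 1 ≤ k ≤ N, where H_n = Σ_{j=1}^{n} 1/j (H_0 = 0). Then for every integer k with 1 ≤ k ≤ N−2 one has the exact second-difference formula φ(k+2,1) − 2φ(k+1,1) + φ(k,1) = 2/N² − 2/(N(k+1)), which is negative; consequently the difference sequence k ↦ φ(k+1,1) − φ(k,1) is strictly decreasing on {1,…,N−1}, i.e. φ(·,1) is strictly concave (unimodal). -/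
/-- The expected proportional duration of a relatively best item. -/
noncomputable def phiOne (N k : ℕ) : ℝ :=
  ((k : ℝ) / (N : ℝ) ^ 2) * (1 + (k : ℝ) - N + 2 * (N : ℝ) * (harm (N - 1) - harm (k - 1)))

lemma harm_succ (n : ℕ) : harm (n + 1) = harm n + 1 / (n + 1) := by
  unfold harm
  rw [Finset.sum_Icc_succ_top (by omega : 1 ≤ n + 1)]
  push_cast
  ring

lemma phi_main (N : ℕ) (hN : 1 ≤ N) (k : ℕ) (hk : 1 ≤ k) (hk2 : k ≤ N - 2) :
    phiOne N (k + 2) - 2 * phiOne N (k + 1) + phiOne N k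
      = 2 / (N : ℝ) ^ 2 - 2 / ((N : ℝ) * ((k : ℝ) + 1)) := by
  obtain ⟨m, rfl⟩ : ∃ m, k = m + 1 := ⟨k - 1, by omega⟩
  have hN3 : 3 ≤ N := by omega
  have h1 : (m + 1 + 2) - 1 = m + 2 := by omega
  have h2 : (m + 1 + 1) - 1 = m + 1 := by omega
  have h3 : (m + 1) - 1 = m := by omega
  unfold phiOne
  rw [h1, h2, h3, harm_succ (m + 1), harm_succ m]
  have hNpos : (0 : ℝ) < (N : ℝ) := by exact_mod_cast (by omega : 0 < N)
  have hm1 : ((m : ℝ) + 1) ≠ 0 := by positivity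
  have hm2 : ((m : ℝ) + 2) ≠ 0 := by positivity
  push_cast
  field_simp
  ring

/-- Exact second difference of `φ(·,1)`, its negativity, and the resulting strict
concavity (strict decrease of the first differences on `{1,…,N−1}`). -/
theorem phi_one_second_difference (N : ℕ) (hN : 1 ≤ N) :
    (∀ k : ℕ, 1 ≤ k → k ≤ N - 2 →
        phiOne N (k + 2) - 2 * phiOne N (k + 1) + phiOne N k
            = 2 / (N : ℝ) ^ 2 - 2 / ((N : ℝ) * ((k : ℝ) + 1)) ∧
          2 / (N : ℝ) ^ 2 - 2 / ((N : ℝ) * ((k : ℝ) + 1)) < 0) ∧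
      StrictAntiOn (fun k : ℕ => phiOne N (k + 1) - phiOne N k)
        (Set.Icc 1 (N - 1)) := by
  have neg : ∀ k : ℕ, 1 ≤ k → k ≤ N - 2 →
      2 / (N : ℝ) ^ 2 - 2 / ((N : ℝ) * ((k : ℝ) + 1)) < 0 := by
    intro k hk hk2
    have hN3 : 3 ≤ N := by omega
    have hNpos : (0 : ℝ) < (N : ℝ) := by exact_mod_cast (by omega : 0 < N)
    have hkN : (k : ℝ) + 1 < (N : ℝ) := by exact_mod_cast (by omega : k + 1 < N)
    have hkpos : (0 : ℝ) < (k : ℝ) + 1 := by positivity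
    have : (N : ℝ) * ((k : ℝ) + 1) < (N : ℝ) ^ 2 := by nlinarith
    have h1 : 2 / (N : ℝ) ^ 2 < 2 / ((N : ℝ) * ((k : ℝ) + 1)) := by
      apply div_lt_div_of_pos_left (by norm_num) (by positivity) this
    linarith
  refine ⟨fun k hk hk2 => ⟨phi_main N hN k hk hk2, neg k hk hk2⟩, ?_⟩
  apply strictAntiOn_of_succ_lt Set.ordConnected_Icc
  intro a _ ha hsa
  simp only [Set.mem_Icc, Order.succ_eq_add_one] at ha hsa ⊢
  have h1 : 1 ≤ a := ha.1
  have h2 : a ≤ N - 2 := by omega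
  have key := phi_main N hN a h1 h2
  have hneg := neg a h1 h2
  show phiOne N (a + 1 + 1) - phiOne N (a + 1) < phiOne N (a + 1) - phiOne N a
  have e : a + 1 + 1 = a + 2 := rfl
  rw [e]
  linarith [key, hneg]
end

section
/- Let x ∈ (0,1] and let (k_N)_{N≥1} be a sequence of integers with 1 ≤ k_N ≤ N and k_N/N → x as N → ∞. Then (k_N/N²)( 1 + k_N − N + 2N(H_{N−1} − H_{k_N−1}) ) → x² − 2x·log x − x as N → ∞, where H_n = Σ_{j=1}^{n} 1/j (H_0 = 0). -/
open Filter Topology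

/-! Since `H_{n-1} - log n → γ`, the difference `H_{N-1} - H_{k_N-1}` is `log (N / k_N) + o(1)`,
which tends to `-log x`; the remaining factors of `φ_N(k_N, 1)` are rational in `k_N / N` and `1 / N`. -/

lemma harm_eq_harmonic (n : ℕ) : harm n = harmonic n := by
  simp [harm, harmonic_eq_sum_Icc, one_div]

lemma tendsto_harm_pred_sub_log :
    Tendsto (fun n : ℕ => harm (n - 1) - Real.log n) atTop (𝓝 Real.eulerMascheroniConstant) := by
  refine (Real.tendsto_harmonic_sub_log_add_one.comp (tendsto_sub_atTop_nat 1)).congr' ?_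
  filter_upwards [eventually_ge_atTop 1] with n hn
  simp [harm_eq_harmonic, Nat.cast_sub hn]

lemma tendsto_atTop_of_tendsto_div_natCast {k : ℕ → ℕ} {x : ℝ} (hx : 0 < x)
    (hlim : Tendsto (fun n : ℕ => (k n : ℝ) / n) atTop (𝓝 x)) : Tendsto k atTop atTop := by
  rw [← tendsto_natCast_atTop_iff (R := ℝ)]
  refine (Tendsto.pos_mul_atTop hx hlim tendsto_natCast_atTop_atTop).congr' ?_
  filter_upwards [eventually_ne_atTop 0] with n hn
  field_simp

lemma tendsto_harm_pred_sub_harm_pred {a b : ℕ → ℕ} (ha : Tendsto a atTop atTop)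
    (hb : Tendsto b atTop atTop) {r : ℝ} (hr : 0 < r)
    (hlim : Tendsto (fun n : ℕ => (b n : ℝ) / a n) atTop (𝓝 r)) :
    Tendsto (fun n => harm (a n - 1) - harm (b n - 1)) atTop (𝓝 (-Real.log r)) := by
  have hlog := ((Real.continuousAt_log hr.ne').tendsto).comp hlim
  have hsum := ((tendsto_harm_pred_sub_log.comp ha).sub
    (tendsto_harm_pred_sub_log.comp hb)).sub hlog
  rw [sub_self, zero_sub] at hsum
  refine hsum.congr' ?_
  filter_upwards [ha.eventually_ne_atTop 0, hb.eventually_ne_atTop 0] with n han hbn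
  simp only [Function.comp_apply]
  rw [Real.log_div (by exact_mod_cast hbn) (by exact_mod_cast han)]
  ring

theorem phi_one_tendsto_general (x : ℝ) (hx : x ∈ Set.Ioc (0 : ℝ) 1) (k : ℕ → ℕ)
    (hlim : Tendsto (fun N : ℕ => (k N : ℝ) / N) atTop (𝓝 x)) :
    Tendsto
      (fun N : ℕ => ((k N : ℝ) / (N : ℝ) ^ 2) *
        (1 + (k N : ℝ) - N + 2 * (N : ℝ) * (harm (N - 1) - harm (k N - 1))))
      atTop (𝓝 (x ^ 2 - 2 * x * Real.log x - x)) := by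
  have hharm := tendsto_harm_pred_sub_harm_pred tendsto_id
    (tendsto_atTop_of_tendsto_div_natCast hx.1 hlim) hx.1 hlim
  have hinv : Tendsto (fun N : ℕ => 1 / (N : ℝ)) atTop (𝓝 0) :=
    tendsto_one_div_atTop_nhds_zero_nat
  have hmain := hlim.mul ((hinv.add hlim).sub_const 1 |>.add (hharm.const_mul 2))
  rw [show x * (0 + x - 1 + 2 * -Real.log x) = x ^ 2 - 2 * x * Real.log x - x by ring] at hmain
  refine hmain.congr' ?_
  filter_upwards [eventually_ne_atTop 0] with N hN
  simp only [id]
  field_simp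

/-- If `k_N/N → x ∈ (0,1]`, then `φ_N(k_N,1) → x² − 2x log x − x`. -/
theorem phi_one_tendsto (x : ℝ) (hx : x ∈ Set.Ioc (0 : ℝ) 1) (k : ℕ → ℕ)
    (hk : ∀ N : ℕ, 1 ≤ N → 1 ≤ k N ∧ k N ≤ N)
    (hlim : Tendsto (fun N : ℕ => (k N : ℝ) / N) atTop (𝓝 x)) :
    Tendsto
      (fun N : ℕ => ((k N : ℝ) / (N : ℝ) ^ 2) *
        (1 + (k N : ℝ) - N + 2 * (N : ℝ) * (harm (N - 1) - harm (k N - 1))))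
      atTop (𝓝 (x ^ 2 - 2 * x * Real.log x - x)) :=
  phi_one_tendsto_general x hx k hlim
end

section
/- There exists a unique real number b ∈ (0,1) with 2·log b = 3(b−1); moreover this b satisfies 0.41718 < b < 0.41719. -/
/-!
`f x = 2 log x - 3 (x - 1)` is strictly concave on `(0, ∞)` and vanishes at `1`; a strictly
concave function is positive strictly between two of its zeros, so `f` has at most one zero
in `(0, 1)`. Taylor bounds for `exp` show `f 0.41718 < 0 < f 0.41719`, and the intermediate
value theorem places that zero in `(0.41718, 0.41719)`.
-/

open Real Set

theorem StrictConcaveOn.pos_of_mem_Ioo_of_eq_zero {s : Set ℝ} {f : ℝ → ℝ}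
    (hf : StrictConcaveOn ℝ s f) {a b c : ℝ} (ha : a ∈ s) (hc : c ∈ s) (hfa : f a = 0)
    (hfc : f c = 0) (hb : b ∈ Ioo a c) : 0 < f b := by
  have hac : a < c := hb.1.trans hb.2
  have := hf.lt_on_openSegment ha hc hac.ne ((openSegment_eq_Ioo hac).symm ▸ hb)
  rwa [hfa, hfc, min_self] at this

theorem StrictConcaveOn.eq_of_eq_zero_of_lt {s : Set ℝ} {f : ℝ → ℝ}
    (hf : StrictConcaveOn ℝ s f) {c x y : ℝ} (hc : c ∈ s) (hx : x ∈ s) (hy : y ∈ s)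
    (hxc : x < c) (hyc : y < c) (hfc : f c = 0) (hfx : f x = 0) (hfy : f y = 0) : x = y := by
  rcases lt_trichotomy x y with hxy | hxy | hxy
  · exact absurd (hf.pos_of_mem_Ioo_of_eq_zero hx hc hfx hfc ⟨hxy, hyc⟩) hfy.not_gt
  · exact hxy
  · exact absurd (hf.pos_of_mem_Ioo_of_eq_zero hy hc hfy hfc ⟨hxy, hxc⟩) hfx.not_gt

noncomputable def thresholdGap (x : ℝ) : ℝ := 2 * log x - 3 * (x - 1)

theorem thresholdGap_one : thresholdGap 1 = 0 := by
  simp [thresholdGap]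

theorem strictConcaveOn_thresholdGap : StrictConcaveOn ℝ (Ioi 0) thresholdGap := by
  refine ⟨convex_Ioi 0, fun x hx y hy hxy a b ha hb hab => ?_⟩
  have hlog := strictConcaveOn_log_Ioi.2 hx hy hxy ha hb hab
  simp only [thresholdGap, smul_eq_mul] at hlog ⊢
  linear_combination 2 * hlog + 3 * hab

theorem continuousOn_thresholdGap : ContinuousOn thresholdGap (Ioi 0) := by
  unfold thresholdGap
  exact (continuousOn_const.mul (continuousOn_log.mono fun x hx => ne_of_gt hx)).sub
    (by fun_prop)

theorem exp_87423_lt : exp (87423 / 100000) < 100000 / 41718 := by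
  refine (exp_bound' (by norm_num) (by norm_num) (n := 9) (by norm_num)).trans_lt ?_
  simp only [Finset.sum_range_succ, Finset.sum_range_zero, Nat.factorial]
  norm_num

theorem lt_exp_874215 : 100000 / 41719 < exp (874215 / 1000000) := by
  refine lt_of_lt_of_le ?_ (sum_le_exp_of_nonneg (by norm_num) 9)
  simp only [Finset.sum_range_succ, Finset.sum_range_zero, Nat.factorial]
  norm_num

theorem thresholdGap_0_41718_neg : thresholdGap 0.41718 < 0 := by
  have hlog : log 0.41718 < -(87423 / 100000) := by
    rw [log_lt_iff_lt_exp (by norm_num), exp_neg, lt_inv_comm₀ (by norm_num) (exp_pos _)]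
    exact exp_87423_lt.trans_eq (by norm_num)
  unfold thresholdGap
  linarith

theorem thresholdGap_0_41719_pos : 0 < thresholdGap 0.41719 := by
  have hlog : -(874215 / 1000000) < log 0.41719 := by
    rw [lt_log_iff_exp_lt (by norm_num), exp_neg, inv_lt_comm₀ (exp_pos _) (by norm_num)]
    exact lt_exp_874215.trans_eq' (by norm_num)
  unfold thresholdGap
  linarith

/-- There is a unique `b ∈ (0,1)` with `2 log b = 3(b−1)`, and it satisfies
`0.41718 < b < 0.41719`. -/
theorem threshold_b_exists_unique :
    (∃! b : ℝ, b ∈ Set.Ioo (0 : ℝ) 1 ∧ 2 * Real.log b = 3 * (b - 1)) ∧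
      ∀ b : ℝ, b ∈ Set.Ioo (0 : ℝ) 1 → 2 * Real.log b = 3 * (b - 1) →
        0.41718 < b ∧ b < 0.41719 := by
  obtain ⟨b, hb, hfb⟩ : ∃ b ∈ Ioo (0.41718 : ℝ) 0.41719, thresholdGap b = 0 :=
    intermediate_value_Ioo (by norm_num)
      (continuousOn_thresholdGap.mono fun x hx => lt_of_lt_of_le (by norm_num) hx.1)
      ⟨thresholdGap_0_41718_neg, thresholdGap_0_41719_pos⟩
  have hb01 : b ∈ Ioo (0 : ℝ) 1 := ⟨by linarith [hb.1], by linarith [hb.2]⟩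
  have hunique : ∀ x ∈ Ioo (0 : ℝ) 1, 2 * log x = 3 * (x - 1) → x = b := fun x hx hfx =>
    strictConcaveOn_thresholdGap.eq_of_eq_zero_of_lt (mem_Ioi.2 one_pos) hx.1 hb01.1 hx.2 hb01.2
      thresholdGap_one (sub_eq_zero.2 hfx) hfb
  exact ⟨⟨b, ⟨hb01, sub_eq_zero.1 hfb⟩, fun x hx => hunique x hx.1 hx.2⟩,
    fun x hx hfx => hunique x hx hfx ▸ hb⟩
end

section
/- Let b ∈ (0,1) be the unique solution of 2·log b = 3(b−1). Then for every x ∈ (0,b) one has x(1−x) < 2(x² − x − x·log x), and for every x ∈ (b,1) one has x(1−x) > 2(x² − x − x·log x). -/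
/-!
Writing `h x = 2 log x - 3 (x - 1)`, one has
`x (1 - x) - 2 (x² - x - x log x) = x · h x`, so on `(0, 1)` the comparison has the sign of `h`.
The function `h` is strictly concave and vanishes at `b` and at `1`; a strictly concave function is
positive strictly between two of its zeros and negative below both.
-/

open Real Set

section RootSigns

variable {𝕜 : Type*} [Field 𝕜] [LinearOrder 𝕜] [IsStrictOrderedRing 𝕜] {s : Set 𝕜} {f : 𝕜 → 𝕜}
  {a c x : 𝕜}

theorem StrictConcaveOn.pos_between_zeros (hf : StrictConcaveOn 𝕜 s f) (ha : a ∈ s) (hc : c ∈ s)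
    (hfa : f a = 0) (hfc : f c = 0) (hx : x ∈ Ioo a c) : 0 < f x := by
  have hac : a < c := hx.1.trans hx.2
  have := hf.lt_on_openSegment ha hc hac.ne (by rwa [openSegment_eq_Ioo hac])
  rwa [hfa, hfc, min_self] at this

theorem StrictConcaveOn.neg_below_zeros (hf : StrictConcaveOn 𝕜 s f) (hx : x ∈ s) (hc : c ∈ s)
    (hxa : x < a) (hac : a < c) (hfa : f a = 0) (hfc : f c = 0) : f x < 0 := by
  have := hf.lt_on_openSegment hx hc (hxa.trans hac).ne
    (by rw [openSegment_eq_Ioo (hxa.trans hac)]; exact ⟨hxa, hac⟩)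
  rw [hfa, hfc] at this
  exact min_lt_iff.1 this |>.resolve_right (lt_irrefl 0)

end RootSigns

theorem strictConcaveOn_two_mul_log_sub_three_mul :
    StrictConcaveOn ℝ (Ioi 0) fun x ↦ 2 * log x - 3 * (x - 1) := by
  refine ⟨convex_Ioi 0, fun x hx y hy hxy a b ha hb hab ↦ ?_⟩
  have hlog := strictConcaveOn_log_Ioi.2 hx hy hxy ha hb hab
  simp only [smul_eq_mul] at hlog ⊢
  linear_combination 2 * hlog + 3 * hab

theorem mul_one_sub_sub_two_mul (x : ℝ) :
    x * (1 - x) - 2 * (x ^ 2 - x - x * log x) = x * (2 * log x - 3 * (x - 1)) := by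
  ring

theorem threshold_b_sign_characterization_general (b : ℝ) (hb : b ∈ Set.Ioo (0 : ℝ) 1)
    (hb_eq : 2 * Real.log b = 3 * (b - 1)) :
    (∀ x : ℝ, 0 < x → x < b →
        x * (1 - x) < 2 * (x ^ 2 - x - x * Real.log x)) ∧
      ∀ x : ℝ, b < x → x < 1 →
        x * (1 - x) > 2 * (x ^ 2 - x - x * Real.log x) := by
  have hconcave := strictConcaveOn_two_mul_log_sub_three_mul
  have hb_zero : 2 * log b - 3 * (b - 1) = 0 := by linarith
  have hone_zero : 2 * log 1 - 3 * ((1 : ℝ) - 1) = 0 := by simp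
  have hb_pos : b ∈ Ioi (0 : ℝ) := hb.1
  have hone_pos : (1 : ℝ) ∈ Ioi 0 := mem_Ioi.2 one_pos
  refine ⟨fun x hx0 hxb ↦ ?_, fun x hbx hx1 ↦ ?_⟩
  · have hneg := hconcave.neg_below_zeros hx0 hone_pos hxb hb.2 hb_zero hone_zero
    linarith [mul_one_sub_sub_two_mul x, mul_neg_of_pos_of_neg hx0 hneg]
  · have hpos := hconcave.pos_between_zeros hb_pos hone_pos hb_zero hone_zero ⟨hbx, hx1⟩
    linarith [mul_one_sub_sub_two_mul x, mul_pos (hb.1.trans hbx) hpos]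

/-- For the unique solution `b ∈ (0,1)` of `2 log b = 3(b−1)`: below `b` the gain of
stopping on a second best candidate is smaller than the continuation payoff, and above
`b` it is larger. -/
theorem threshold_b_sign_characterization (b : ℝ) (hb : b ∈ Set.Ioo (0 : ℝ) 1)
    (hb_eq : 2 * Real.log b = 3 * (b - 1))
    (hb_unique : ∀ b' : ℝ, b' ∈ Set.Ioo (0 : ℝ) 1 → 2 * Real.log b' = 3 * (b' - 1) → b' = b) :
    (∀ x : ℝ, 0 < x → x < b →
        x * (1 - x) < 2 * (x ^ 2 - x - x * Real.log x)) ∧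
      ∀ x : ℝ, b < x → x < 1 →
        x * (1 - x) > 2 * (x ^ 2 - x - x * Real.log x) :=
  threshold_b_sign_characterization_general b hb hb_eq
end
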